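/- Let e ≥ 5 and let G be the dihedral group of order 2^{e+1}. Then every integer g ≥ (e−3)·2^e + 4 lies in sp(G), while (e−3)·2^e + 3 does not lie in sp(G). Hence the stable upper genus of G equals (e−3)·2^e + 4. -/

import Mathlib

open scoped commutatorElement

/-- Genus spectrum membership, as in Riemann's Existence Theorem. -/
def IsGenus (G : Type*) [Group G] (g : ℕ) : Prop :=
  2 ≤ g ∧ ∃ (h r : ℕ) (n : Fin r → ℕ) (a b : Fin h → G) (c : Fin r → G),
    (∀ j, 2 ≤ n j) ∧ (∀ j, orderOf (c j) = n j) ∧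
    Subgroup.closure (Set.range a ∪ Set.range b ∪ Set.range c) = ⊤ ∧
    (List.ofFn (fun i => ⁅a i, b i⁆)).prod * (List.ofFn c).prod = 1 ∧
    2 * ((g : ℚ) - 1) =
      (Nat.card G : ℚ) * (2 * ((h : ℚ) - 1) + ∑ j, (1 - 1 / (n j : ℚ)))

/-!
Write `N = 2 ^ e`. A generating vector with `h = 0` and periods `N / 2 ^ wⱼ` realises the genus `g`
with `g - 1 + ∑ 2 ^ wⱼ = (r - 2) N`.

For the upper range write `g - 1 = p N - m` with `0 ≤ m < N`. Reflections, together with the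
rotations `r (2 ^ v)` for `v` running over the binary digits of `m`, can be arranged to generate, to
have product one and to realise `g`, as soon as `p` is at least the number of ones in the binary
expansion of `⌊m / 2⌋`; the bound `g ≥ (e - 3) N + 4` guarantees this.

For `g = (e - 3) N + 3` the relation reads `∑ 2 ^ wⱼ + 2 = A N` with `A = 2h + r + 1 - e`. Writing
`A N - 2` as a sum of powers of two below `N` takes at least `2A + e - 3` terms, and one more if
`1` is among them. Hence `h = 0`, `A ≤ 2`, fewer than `2A` of the `cⱼ` are involutions, and for
`A = 2` none has order `N`. But a nontrivial character `D_N → ℤ/2` is nontrivial on an even, positive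
number of the `cⱼ`: the sign character forces two reflections, and the two characters that are
nontrivial on `r 1` together force four unless some `cⱼ` is a rotation of order `N`.
-/

open Finset

theorem isGenus_of_list {G : Type*} [Group G] {g : ℕ} (l : List G) (hg : 2 ≤ g)
    (hl : ∀ x ∈ l, 2 ≤ orderOf x) (hgen : Subgroup.closure {x | x ∈ l} = ⊤) (hprod : l.prod = 1)
    (hRH : 2 * ((g : ℚ) - 1) = Nat.card G * ((l.map fun x ↦ 1 - 1 / (orderOf x : ℚ)).sum - 2)) :
    IsGenus G g := by
  refine ⟨hg, 0, l.length, fun j ↦ orderOf (l.get j), Fin.elim0, Fin.elim0, l.get,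
    fun j ↦ hl _ (l.get_mem j), fun j ↦ rfl, ?_, by simpa using hprod, ?_⟩
  · simpa [Set.range_eq_empty, Set.range_list_get] using hgen
  · rw [hRH, ← List.sum_ofFn]
    conv_lhs => rw [← List.ofFn_get l, List.map_ofFn]
    push_cast [Function.comp_def]
    ring

theorem two_le_card_filter_ne_one {G : Type*} [Group G] {r : ℕ} {c : Fin r → G}
    (hgen : Subgroup.closure (Set.range c) = ⊤) (hprod : (List.ofFn c).prod = 1)
    {f : G →* Multiplicative (ZMod 2)} (hf : f ≠ 1) : 2 ≤ #{j | f (c j) ≠ 1} := by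
  have hne : #{j | f (c j) ≠ 1} ≠ 0 := by
    refine fun h ↦ hf (MonoidHom.ext fun x ↦ ?_)
    have hker : Subgroup.closure (Set.range c) ≤ f.ker := by
      rw [Subgroup.closure_le]
      rintro _ ⟨j, rfl⟩
      simpa using filter_eq_empty_iff.1 (card_eq_zero.1 h) (mem_univ j)
    exact hker (hgen ▸ Subgroup.mem_top x)
  have heven : Even #{j | f (c j) ≠ 1} := by
    have h1 : ∏ j, f (c j) = 1 := by
      rw [← List.prod_ofFn, show (fun j ↦ f (c j)) = f ∘ c from rfl, ← List.map_ofFn,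
        ← map_list_prod, hprod, map_one]
    have h2 : ∀ j ∈ ({j | f (c j) ≠ 1} : Finset _), f (c j) = .ofAdd 1 := by
      intro j hj
      simp only [mem_filter, mem_univ, true_and] at hj
      generalize f (c j) = y at hj
      revert y; decide
    rw [← prod_filter_ne_one, prod_congr rfl h2, prod_const, ← ofAdd_nsmul] at h1
    simpa [← ZMod.natCast_eq_zero_iff_even] using h1
  obtain ⟨k, hk⟩ := heven
  omega

namespace Nat

theorem length_bitIndices_le {n k : ℕ} (h : n < 2 ^ k) : n.bitIndices.length ≤ k := by
  induction k generalizing n with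
  | zero => simp [Nat.lt_one_iff.1 h]
  | succ k ih =>
    obtain ⟨μ, rfl | rfl⟩ := n.even_or_odd'
    · simpa using (ih (by omega)).trans k.le_succ
    · simpa using ih (by omega)

theorem length_bitIndices_lt {n k : ℕ} (h : n + 1 < 2 ^ k) : n.bitIndices.length < k := by
  induction k generalizing n with
  | zero => omega
  | succ k ih =>
    obtain ⟨μ, rfl | rfl⟩ := n.even_or_odd'
    · simpa using Nat.lt_succ_of_le (length_bitIndices_le (k := k) (by omega))
    · simpa using ih (by omega)

theorem lt_of_mem_bitIndices {m k v : ℕ} (hm : m < 2 ^ k) (hv : v ∈ m.bitIndices) : v < k :=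
  (Nat.pow_lt_pow_iff_right one_lt_two).1 ((two_pow_le_of_mem_bitIndices hv).trans_lt hm)

theorem two_mul_add_le_card_of_sum_two_pow {ι : Type*} {s : Finset ι} {w : ι → ℕ} {b e A : ℕ}
    (hb : b < e) (hw : ∀ i ∈ s, w i < e) (hsum : ∑ i ∈ s, 2 ^ w i + 2 ^ b = A * 2 ^ e) :
    2 * A + e ≤ #s + b + 2 := by
  induction e, hb using Nat.le_induction generalizing s A with
  | base =>
    have hle : ∑ i ∈ s, 2 ^ w i ≤ #s * 2 ^ b :=
      sum_le_card_nsmul s _ _ fun i hi ↦ Nat.pow_le_pow_right two_pos (by grind)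
    have : 2 * A * 2 ^ b ≤ (#s + 1) * 2 ^ b := by rw [pow_succ] at hsum; nlinarith
    have := Nat.le_of_mul_le_mul_right this (by positivity)
    omega
  | succ e hbe ih =>
    set D := #{i ∈ s | w i = e}
    have hsplit : D * 2 ^ e + ∑ i ∈ s with ¬ w i = e, 2 ^ w i + 2 ^ b = 2 * A * 2 ^ e := by
      rw [← sum_filter_add_sum_filter_not s (w · = e), sum_const_nat fun i hi ↦ by
        rw [(mem_filter.1 hi).2]] at hsum
      exact hsum.trans (by ring)
    have hcard := card_filter_add_card_filter_not (s := s) (w · = e)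
    have hpos := Nat.two_pow_pos b
    have hD : D < 2 * A := Nat.lt_of_mul_lt_mul_right (a := 2 ^ e) (by omega)
    have hrest : ∑ i ∈ s with ¬ w i = e, 2 ^ w i + 2 ^ b = (2 * A - D) * 2 ^ e := by
      rw [Nat.sub_mul]; omega
    have := ih (fun i hi ↦ by grind) hrest
    omega

theorem two_mul_add_lt_card_of_sum_two_pow {ι : Type*} [DecidableEq ι] {s : Finset ι}
    {w : ι → ℕ} {e A : ℕ} (he : 2 < e) (hw : ∀ i ∈ s, w i < e) (h0 : ∃ i ∈ s, w i = 0)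
    (hsum : ∑ i ∈ s, 2 ^ w i + 2 = A * 2 ^ e) : 2 * A + e < #s + 3 := by
  obtain ⟨i, hi, hi0⟩ := h0
  -- a summand `1` forces a second one by parity; removing both turns `+ 2` into `+ 2 ^ 2`
  rw [← add_sum_erase s _ hi, hi0] at hsum
  have heven : 2 ∣ A * 2 ^ e := Dvd.dvd.mul_left (dvd_pow_self 2 (by omega)) A
  obtain ⟨j, hj, hj0⟩ : ∃ j ∈ s.erase i, w j = 0 := by
    by_contra! h
    have : 2 ∣ ∑ k ∈ s.erase i, 2 ^ w k := dvd_sum fun k hk ↦ dvd_pow_self 2 (h k hk)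
    omega
  rw [← add_sum_erase _ _ hj, hj0] at hsum
  have := two_mul_add_le_card_of_sum_two_pow (s := (s.erase i).erase j) (b := 2) (A := A) he
    (fun k hk ↦ hw k (mem_of_mem_erase (mem_of_mem_erase hk))) (by omega)
  have hpos := Finset.card_pos.2 ⟨j, hj⟩
  rw [card_erase_of_mem hj] at this
  rw [card_erase_of_mem hi] at this hpos
  omega

end Nat

namespace DihedralGroup

variable {n e : ℕ}

theorem eq_top_of_sr_zero_mem_of_r_one_mem [NeZero n] {H : Subgroup (DihedralGroup n)}
    (h0 : sr 0 ∈ H) (h1 : r 1 ∈ H) : H = ⊤ := by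
  have hr : ∀ i, r i ∈ H := fun i ↦ by
    simpa [r_one_pow] using H.pow_mem h1 i.val
  refine eq_top_iff.2 fun x _ ↦ ?_
  cases x with
  | r i => exact hr i
  | sr i => simpa using H.mul_mem h0 (hr i)

theorem orderOf_r_two_pow {v : ℕ} (hv : v < e) :
    orderOf (r ((2 ^ v : ℕ) : ZMod (2 ^ e))) = 2 ^ (e - v) := by
  rw [orderOf_r, ZMod.val_natCast, Nat.mod_eq_of_lt (Nat.pow_lt_pow_right one_lt_two hv),
    Nat.gcd_eq_right (Nat.pow_dvd_pow 2 hv.le), Nat.pow_div hv.le two_pos]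

def bitRotations (e m : ℕ) : List (DihedralGroup (2 ^ e)) :=
  m.bitIndices.map fun v ↦ r ((2 ^ v : ℕ) : ZMod (2 ^ e))

theorem prod_bitRotations (m : ℕ) : (bitRotations e m).prod = r m := by
  rw [bitRotations]
  conv_rhs => rw [← Nat.sum_map_two_pow_bitIndices m]
  induction m.bitIndices with
  | nil => simp
  | cons v L ih => rw [List.map_cons, List.prod_cons, ih, r_mul_r, List.map_cons, List.sum_cons,
      Nat.cast_add]

theorem sum_map_bitRotations {m : ℕ} (hm : m < 2 ^ e) :
    ((bitRotations e m).map fun x ↦ 1 - 1 / (orderOf x : ℚ)).sum =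
      m.bitIndices.length - m / 2 ^ e := by
  suffices key : ∀ L : List ℕ, (∀ v ∈ L, v < e) →
      ((L.map fun v ↦ r ((2 ^ v : ℕ) : ZMod (2 ^ e))).map fun x ↦ 1 - 1 / (orderOf x : ℚ)).sum =
        L.length - ((L.map (2 ^ ·)).sum : ℕ) / 2 ^ e by
    rw [bitRotations, key _ fun v ↦ Nat.lt_of_mem_bitIndices hm, Nat.sum_map_two_pow_bitIndices]
  intro L hL
  induction L with
  | nil => simp
  | cons v L ih =>
    have hv := hL v List.mem_cons_self
    have hpow : (2 : ℚ) ^ (e - v) * 2 ^ v = 2 ^ e := by rw [← pow_add, Nat.sub_add_cancel hv.le]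
    rw [List.map_cons, List.map_cons, List.sum_cons, orderOf_r_two_pow hv,
      ih fun w hw ↦ hL w (List.mem_cons_of_mem v hw), List.map_cons, List.sum_cons,
      List.length_cons, ← hpow]
    push_cast
    field_simp
    ring

theorem isGenus_of_append_bitRotations {m g : ℕ} (C : List (DihedralGroup (2 ^ e)))
    (hm : m < 2 ^ e) (hg : 2 ≤ g) (hC : ∀ x ∈ C, orderOf x = 2) (hprod : C.prod * r m = 1)
    (hgen : Subgroup.closure {x | x ∈ C ++ bitRotations e m} = ⊤)
    (hRH : 2 * (g + m + 2 * 2 ^ e) = (C.length + 2 * m.bitIndices.length) * 2 ^ e + 2) :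
    IsGenus (DihedralGroup (2 ^ e)) g := by
  refine isGenus_of_list _ hg (fun x hx ↦ ?_) hgen
    (by rw [List.prod_append, prod_bitRotations, hprod]) ?_
  · obtain hx | hx := List.mem_append.1 hx
    · exact (hC x hx).ge
    · obtain ⟨v, hv, rfl⟩ := List.mem_map.1 hx
      have hve := Nat.lt_of_mem_bitIndices hm hv
      rw [orderOf_r_two_pow hve]
      exact Nat.le_self_pow (by omega) 2
  · rw [List.map_append, List.sum_append, sum_map_bitRotations hm,
      List.map_congr_left fun x hx ↦ by rw [hC x hx], List.map_const', List.sum_replicate, nat_card]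
    have hRH' : 2 * ((g : ℚ) + m + 2 * 2 ^ e) =
        (C.length + 2 * m.bitIndices.length) * 2 ^ e + 2 := by
      exact_mod_cast hRH
    have key : (2 : ℚ) ^ e * (m / 2 ^ e) = m := mul_div_cancel₀ _ (by positivity)
    push_cast
    linear_combination hRH' + 2 * key

theorem isGenus_of_add_eq {m p g : ℕ} (hm : m < 2 ^ e) (hg : 2 ≤ g)
    (hp : (m / 2).bitIndices.length ≤ p) (h : g + m = p * 2 ^ e + 1) :
    IsGenus (DihedralGroup (2 ^ e)) g := by
  obtain ⟨k, rfl⟩ := Nat.exists_eq_add_of_le hp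
  have hsr : (sr 0 : DihedralGroup (2 ^ e)) ^ (2 * k + 1) = sr 0 := by
    rw [pow_succ, pow_mul, sq, sr_mul_self, one_pow, one_mul]
  obtain ⟨μ, rfl | rfl⟩ := m.even_or_odd'
  · refine isGenus_of_append_bitRotations
      (List.replicate (2 * k + 1) (sr 0) ++ [sr 1, sr 1, sr (-((2 * μ : ℕ) : ZMod (2 ^ e)))])
      hm hg (by simp [orderOf_sr]) ?_ ?_ ?_
    · simp [hsr, sr_mul_sr, r_mul_r]
    · refine eq_top_of_sr_zero_mem_of_r_one_mem (Subgroup.subset_closure (by simp)) ?_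
      rw [show (r 1 : DihedralGroup (2 ^ e)) = sr 0 * sr 1 by simp [sr_mul_sr]]
      exact Subgroup.mul_mem _ (Subgroup.subset_closure (by simp))
        (Subgroup.subset_closure (by simp))
    · rw [Nat.mul_div_cancel_left μ two_pos] at h
      simp only [List.length_append, List.length_replicate, List.length_cons, List.length_nil,
        Nat.bitIndices_two_mul, List.length_map]
      linarith
  · -- the binary digit `0` of `m` puts `r 1` among the rotations, so `sr 1` is not needed
    refine isGenus_of_append_bitRotations
      (List.replicate (2 * k + 1) (sr 0) ++ [sr (-((2 * μ + 1 : ℕ) : ZMod (2 ^ e)))])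
      hm hg (by simp [orderOf_sr]) ?_ ?_ ?_
    · simp [hsr, sr_mul_sr, r_mul_r]
    · refine eq_top_of_sr_zero_mem_of_r_one_mem (Subgroup.subset_closure (by simp)) ?_
      exact Subgroup.subset_closure (by simp [bitRotations])
    · rw [show (2 * μ + 1) / 2 = μ by omega] at h
      simp only [List.length_append, List.length_replicate, List.length_cons, List.length_nil,
        Nat.bitIndices_two_mul_add_one, List.length_map]
      linarith

theorem isGenus_of_sub_three_mul_add_four_le {g : ℕ} (he : 1 ≤ e) (hg : (e - 3) * 2 ^ e + 4 ≤ g) :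
    IsGenus (DihedralGroup (2 ^ e)) g := by
  have hdiv := Nat.div_add_mod' (g - 2) (2 ^ e)
  have hmod := Nat.mod_lt (g - 2) (Nat.two_pow_pos e)
  set q := (g - 2) / 2 ^ e
  set s := (g - 2) % 2 ^ e
  have hq : e - 3 ≤ q := (Nat.le_div_iff_mul_le (Nat.two_pow_pos e)).2 (by omega)
  have hpow : 2 ^ e = 2 * 2 ^ (e - 1) := by rw [← pow_succ']; congr; omega
  refine isGenus_of_add_eq (m := 2 ^ e - 1 - s) (p := q + 1) (by omega) (by omega) ?_
    (by rw [add_mul]; omega)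
  rcases (show e - 1 ≤ q + 1 ∨ q = e - 3 by omega) with hq' | hq'
  · exact (Nat.length_bitIndices_le (by omega)).trans hq'
  · rw [hq'] at hdiv
    have := Nat.length_bitIndices_lt (n := (2 ^ e - 1 - s) / 2) (k := e - 1) (by omega)
    omega

def modTwoChar (hn : 2 ∣ n) (a b : ZMod 2) : DihedralGroup n →* Multiplicative (ZMod 2) where
  toFun
    | r i => .ofAdd (b * ZMod.castHom hn (ZMod 2) i)
    | sr i => .ofAdd (a + b * ZMod.castHom hn (ZMod 2) i)
  map_one' := by
    change Multiplicative.ofAdd (b * ZMod.castHom hn (ZMod 2) 0) = 1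
    simp
  map_mul' := by
    rintro (i | i) (j | j) <;>
    · simp only [r_mul_r, r_mul_sr, sr_mul_r, sr_mul_sr, map_add, map_sub, ← ofAdd_add]
      congr 1
      generalize ZMod.castHom hn (ZMod 2) i = x
      generalize ZMod.castHom hn (ZMod 2) j = y
      revert a b x y
      decide

@[simp] theorem modTwoChar_r (hn : 2 ∣ n) (a b : ZMod 2) (i : ZMod n) :
    modTwoChar hn a b (r i) = .ofAdd (b * ZMod.castHom hn (ZMod 2) i) := rfl

@[simp] theorem modTwoChar_sr (hn : 2 ∣ n) (a b : ZMod 2) (i : ZMod n) :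
    modTwoChar hn a b (sr i) = .ofAdd (a + b * ZMod.castHom hn (ZMod 2) i) := rfl

theorem modTwoChar_ne_one (hn : 2 ∣ n) {a b : ZMod 2} (hab : (a, b) ≠ 0) :
    modTwoChar hn a b ≠ 1 := by
  intro h
  have h0 := DFunLike.congr_fun h (sr 0)
  have h1 := DFunLike.congr_fun h (r 1)
  simp only [modTwoChar_sr, modTwoChar_r, map_zero, map_one, mul_zero, add_zero, mul_one,
    MonoidHom.one_apply, ofAdd_eq_one] at h0 h1
  exact hab (Prod.ext h0 h1)

theorem orderOf_r_of_castHom_eq_one (hn : 2 ∣ 2 ^ e) {i : ZMod (2 ^ e)}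
    (hi : ZMod.castHom hn (ZMod 2) i = 1) : orderOf (r i) = 2 ^ e := by
  have : NeZero (2 ^ e) := ⟨by positivity⟩
  rw [ZMod.castHom_apply, ZMod.cast_eq_val, ZMod.natCast_eq_one_iff_odd] at hi
  rw [orderOf_r, (Nat.Coprime.pow_left e (Nat.coprime_two_left.2 hi)).gcd_eq_one, Nat.div_one]

theorem modTwoChar_r_eq_one (hn : 2 ∣ 2 ^ e) (a b : ZMod 2) {i : ZMod (2 ^ e)}
    (hi : orderOf (r i) ≠ 2 ^ e) : modTwoChar hn a b (r i) = 1 := by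
  have : ZMod.castHom hn (ZMod 2) i = 0 := by
    generalize hx : ZMod.castHom hn (ZMod 2) i = x
    fin_cases x
    · rfl
    · exact absurd (orderOf_r_of_castHom_eq_one hn hx) hi
  simp [this]

theorem two_le_card_orderOf_eq_two (hn : 2 ∣ n) {r : ℕ} {c : Fin r → DihedralGroup n}
    (hgen : Subgroup.closure (Set.range c) = ⊤) (hprod : (List.ofFn c).prod = 1) :
    2 ≤ #{j | orderOf (c j) = 2} := by
  refine (two_le_card_filter_ne_one hgen hprod (modTwoChar_ne_one hn (a := 1) (b := 0)
    (by decide))).trans (card_le_card fun j ↦ ?_)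
  simp only [mem_filter, mem_univ, true_and]
  cases c j <;> simp [orderOf_sr]

theorem four_le_card_orderOf_eq_two (he : 1 ≤ e) {r : ℕ} {c : Fin r → DihedralGroup (2 ^ e)}
    (hgen : Subgroup.closure (Set.range c) = ⊤) (hprod : (List.ofFn c).prod = 1)
    (hc : ∀ j, orderOf (c j) ≠ 2 ^ e) : 4 ≤ #{j | orderOf (c j) = 2} := by
  have hn : 2 ∣ 2 ^ e := dvd_pow_self 2 (by omega)
  have hP := two_le_card_filter_ne_one hgen hprod
    (modTwoChar_ne_one hn (a := 0) (b := 1) (by decide))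
  have hQ := two_le_card_filter_ne_one hgen hprod
    (modTwoChar_ne_one hn (a := 1) (b := 1) (by decide))
  set P : Finset (Fin r) := {j | modTwoChar hn 0 1 (c j) ≠ 1}
  set Q : Finset (Fin r) := {j | modTwoChar hn 1 1 (c j) ≠ 1}
  have hdisj : Disjoint P Q := by
    refine disjoint_filter.2 fun j _ hP hQ ↦ ?_
    cases hj : c j with
    | r i => exact hP (hj ▸ modTwoChar_r_eq_one hn 0 1 (hj ▸ hc j))
    | sr i =>
      rw [hj, modTwoChar_sr] at hP hQ
      generalize ZMod.castHom hn (ZMod 2) i = x at hP hQ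
      revert x; decide
  have hsub : P ∪ Q ⊆ ({j | orderOf (c j) = 2} : Finset (Fin r)) := by
    intro j
    simp only [P, Q, mem_union, mem_filter, mem_univ, true_and]
    cases hj : c j with
    | r i => simp [modTwoChar_r_eq_one hn _ _ (hj ▸ hc j)]
    | sr i => simp
  have := card_le_card hsub
  rw [card_union_of_disjoint hdisj] at this
  omega

theorem exists_orderOf_mul_two_pow_eq (he : 1 ≤ e) {x : DihedralGroup (2 ^ e)}
    (hx : 2 ≤ orderOf x) : ∃ w < e, orderOf x * 2 ^ w = 2 ^ e := by
  have hdvd : orderOf x ∣ 2 ^ e := by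
    have := Monoid.order_dvd_exponent x
    rwa [exponent, lcm_eq_left_iff _ _ (by simp) |>.2 (dvd_pow_self 2 (by omega))] at this
  obtain ⟨k, hk, hkx⟩ := (Nat.dvd_prime_pow Nat.prime_two).1 hdvd
  have hk1 : 1 ≤ k := by
    by_contra! h0
    simp [hkx, Nat.lt_one_iff.1 h0] at hx
  exact ⟨e - k, by omega, by rw [hkx, ← pow_add, Nat.add_sub_cancel' hk]⟩

theorem riemannHurwitz_dihedral {g h r : ℕ} {n w : Fin r → ℕ} (hw : ∀ j, n j * 2 ^ w j = 2 ^ e)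
    (hRH : 2 * ((g : ℚ) - 1) = Nat.card (DihedralGroup (2 ^ e)) *
      (2 * ((h : ℚ) - 1) + ∑ j, (1 - 1 / (n j : ℚ)))) :
    g + ∑ j, 2 ^ w j + 2 * 2 ^ e = (2 * h + r) * 2 ^ e + 1 := by
  have hinv : ∀ j, 1 / (n j : ℚ) = 2 ^ w j / 2 ^ e := fun j ↦ by
    have hw' : (n j : ℚ) * 2 ^ w j = 2 ^ e := by exact_mod_cast hw j
    have hn : (n j : ℚ) ≠ 0 := left_ne_zero_of_mul (b := (2 : ℚ) ^ w j) (by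
      rw [hw']; positivity)
    rw [← hw']
    field_simp
  simp only [hinv, sum_sub_distrib, sum_const, card_univ, Fintype.card_fin, nsmul_eq_mul, mul_one,
    ← sum_div, nat_card] at hRH
  push_cast at hRH
  have : (2 : ℚ) ^ e ≠ 0 := by positivity
  field_simp at hRH
  have key : (g : ℚ) + ∑ j, (2 : ℚ) ^ w j + 2 * 2 ^ e = (2 * h + r) * 2 ^ e + 1 := by linarith
  exact_mod_cast key

theorem not_isGenus_sub_three_mul_add_three (he : 3 ≤ e) :
    ¬ IsGenus (DihedralGroup (2 ^ e)) ((e - 3) * 2 ^ e + 3) := by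
  rintro ⟨-, h, r, n, a, b, c, hn, hord, hgen, hprod, hRH⟩
  choose w hwe hw using fun j ↦ exists_orderOf_mul_two_pow_eq (by omega) ((hord j).symm ▸ hn j)
  have hRH' := riemannHurwitz_dihedral (fun j ↦ hord j ▸ hw j) hRH
  have hmul : (e - 1) * 2 ^ e = (e - 3) * 2 ^ e + 2 * 2 ^ e := by rw [← add_mul]; congr 1; omega
  obtain ⟨A, hA, hsum⟩ : ∃ A, 2 * h + r + 1 = A + e ∧ ∑ j, 2 ^ w j + 2 = A * 2 ^ e := by
    have := Nat.lt_of_mul_lt_mul_right (a := 2 ^ e) (b := e - 1) (c := 2 * h + r) (by omega)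
    refine ⟨2 * h + r - (e - 1), by omega, ?_⟩
    rw [Nat.sub_mul]
    omega
  have hcard := Nat.two_mul_add_le_card_of_sum_two_pow (s := univ) (b := 1) (by omega)
    (fun j _ ↦ hwe j) hsum
  rw [card_univ, Fintype.card_fin] at hcard
  have hA0 : A ≠ 0 := by rintro rfl; simp at hsum
  obtain rfl : h = 0 := by omega
  simp only [Set.range_eq_empty, Set.empty_union, List.ofFn_zero, List.prod_nil, one_mul]
    at hgen hprod
  have hinv : #{j | orderOf (c j) = 2} < 2 * A := by
    refine Nat.lt_of_mul_lt_mul_right (a := 2 ^ e) ?_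
    calc #{j | orderOf (c j) = 2} * 2 ^ e = ∑ j with orderOf (c j) = 2, 2 * 2 ^ w j :=
          (sum_const_nat fun j hj ↦ by rw [← hw j, (mem_filter.1 hj).2]).symm
      _ ≤ ∑ j, 2 * 2 ^ w j := sum_le_sum_of_subset (filter_subset _ _)
      _ < 2 * A * 2 ^ e := by rw [← mul_sum, mul_assoc, ← hsum]; omega
  have h2 := two_le_card_orderOf_eq_two (dvd_pow_self 2 (by omega)) hgen hprod
  have h4 := four_le_card_orderOf_eq_two (by omega) hgen hprod fun j hj ↦ by
    have hw0 : w j = 0 := by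
      have := hw j
      rw [hj, Nat.mul_eq_left (by positivity), Nat.pow_eq_one] at this
      omega
    have := Nat.two_mul_add_lt_card_of_sum_two_pow (s := univ) (by omega) (fun j _ ↦ hwe j)
      ⟨j, mem_univ _, hw0⟩ hsum
    rw [card_univ, Fintype.card_fin] at this
    omega
  omega

end DihedralGroup

/-- The stable upper genus of the dihedral group of order `2^(e+1)`, for
`e ≥ 5`, equals `(e-3)·2^e + 4`. -/
theorem stmt9 (e : ℕ) (he : 5 ≤ e) :
    (∀ g : ℕ, (e - 3) * 2 ^ e + 4 ≤ g → IsGenus (DihedralGroup (2 ^ e)) g) ∧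
      ¬ IsGenus (DihedralGroup (2 ^ e)) ((e - 3) * 2 ^ e + 3) :=
  ⟨fun _ ↦ DihedralGroup.isGenus_of_sub_three_mul_add_four_le (by omega),
    DihedralGroup.not_isGenus_sub_three_mul_add_three (by omega)⟩
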